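/- arXiv:math/0511500 — 5 statements merged into one kernel-verified Lean document; each statement's English description precedes it below -/
import Mathlib

section
/- Let r : 𝔤* → 𝔤 be a skew-symmetric linear map (i.e. α(r(β)) = -β(r(α)) for all α, β ∈ 𝔤*) that is a solution of the classical Yang–Baxter equation. Then the image Im r = r(𝔤*) is a Lie subalgebra of 𝔤. -/
/-- If `r : 𝔤* → 𝔤` is a skew-symmetric linear map solving the classical Yang–Baxter
equation, then `Im r` is a Lie subalgebra of `𝔤`. -/
theorem image_of_yang_baxter_solution_is_lie_subalgebra
    {L : Type*} [LieRing L] [LieAlgebra ℝ L] [FiniteDimensional ℝ L]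
    (r : Module.Dual ℝ L →ₗ[ℝ] L)
    (hskew : ∀ α β : Module.Dual ℝ L, α (r β) = - β (r α))
    (hYB : ∀ α β γ : Module.Dual ℝ L,
      α ⁅r β, r γ⁆ + β ⁅r γ, r α⁆ + γ ⁅r α, r β⁆ = 0) :
    ∃ S : LieSubalgebra ℝ L, S.toSubmodule = LinearMap.range r := by
  refine ⟨{ toSubmodule := LinearMap.range r, lie_mem' := ?_ }, rfl⟩
  rintro x y ⟨α, rfl⟩ ⟨β, rfl⟩
  refine ⟨α ∘ₗ (LieAlgebra.ad ℝ L (r β)) - β ∘ₗ (LieAlgebra.ad ℝ L (r α)), ?_⟩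
  have h : ∀ γ : Module.Dual ℝ L,
      γ (r (α ∘ₗ (LieAlgebra.ad ℝ L (r β)) - β ∘ₗ (LieAlgebra.ad ℝ L (r α))) - ⁅r α, r β⁆) = 0 := by
    intro γ
    have h1 := hskew (α ∘ₗ (LieAlgebra.ad ℝ L (r β)) - β ∘ₗ (LieAlgebra.ad ℝ L (r α))) γ
    have h2 := hYB α β γ
    simp only [LinearMap.sub_apply, LinearMap.comp_apply, LieAlgebra.ad_apply, map_sub] at *
    rw [← neg_eq_iff_eq_neg] at h1
    rw [← h1]
    have := lie_skew (r β) (r γ)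
    have := lie_skew (r α) (r γ)
    rw [← lie_skew (r β) (r γ), ← lie_skew (r α) (r γ)] at *
    simp only [map_neg] at *
    linarith
  have := (Module.forall_dual_apply_eq_zero_iff ℝ
    (r (α ∘ₗ (LieAlgebra.ad ℝ L (r β)) - β ∘ₗ (LieAlgebra.ad ℝ L (r α))) - ⁅r α, r β⁆)).mp h
  exact sub_eq_zero.mp this
end

section
/- (Proposition 1.1, forward direction.) Let r : 𝔤* → 𝔤 be a skew-symmetric linear map that is a solution of the classical Yang–Baxter equation. Then Im r is a Lie subalgebra of 𝔤 and the nondegenerate alternating form ω_r on Im r (defined by ω_r(r(α), r(β)) = α(r(β))) satisfies the 2-cocycle identity ω_r([x,y],z) + ω_r([y,z],x) + ω_r([z,x],y) = 0 for all x, y, z ∈ Im r; that is, (Im r, ω_r) is a symplectic Lie subalgebra of 𝔤. -/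
/-- Proposition 1.1, forward direction: if the skew-symmetric map `r : 𝔤* → 𝔤` solves
the classical Yang–Baxter equation, then `Im r` is a Lie subalgebra of `𝔤` and the
nondegenerate alternating form `ω_r` (given by `ω_r(r α, r β) = α (r β)`) satisfies the
2-cocycle identity `ω_r([x,y],z) + ω_r([y,z],x) + ω_r([z,x],y) = 0` on `Im r`.
For `x = r α`, `y = r β`, `z = r γ` in `Im r` one has `ω_r(w, z) = -γ w` for every
`w ∈ Im r`, so the cocycle identity reads `γ ⁅x,y⁆ + α ⁅y,z⁆ + β ⁅z,x⁆ = 0`. -/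
theorem yang_baxter_gives_symplectic_subalgebra
    {L : Type*} [LieRing L] [LieAlgebra ℝ L] [FiniteDimensional ℝ L]
    (r : Module.Dual ℝ L →ₗ[ℝ] L)
    (hskew : ∀ α β : Module.Dual ℝ L, α (r β) = - β (r α))
    (hYB : ∀ α β γ : Module.Dual ℝ L,
      α ⁅r β, r γ⁆ + β ⁅r γ, r α⁆ + γ ⁅r α, r β⁆ = 0) :
    -- `Im r` is a Lie subalgebra
    (∀ x y : L, x ∈ LinearMap.range r → y ∈ LinearMap.range r →
      ⁅x, y⁆ ∈ LinearMap.range r) ∧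
    -- `ω_r` is alternating
    (∀ α : Module.Dual ℝ L, α (r α) = 0) ∧
    -- `ω_r` is nondegenerate on `Im r`
    (∀ α : Module.Dual ℝ L, (∀ β : Module.Dual ℝ L, α (r β) = 0) → r α = 0) ∧
    -- the 2-cocycle identity for `ω_r` on `Im r`
    (∀ (x y z : L) (α β γ : Module.Dual ℝ L), r α = x → r β = y → r γ = z →
      γ ⁅x, y⁆ + α ⁅y, z⁆ + β ⁅z, x⁆ = 0) := by

  have heval : ∀ α : Module.Dual ℝ L,
      Module.Dual.eval ℝ L (r α) = - r.dualMap α := by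
    intro α
    ext β
    simpa using (hskew β α)
  refine ⟨?_, ?_, ?_, ?_⟩
  · rintro x y ⟨α, rfl⟩ ⟨β, rfl⟩
    have hmem : Module.Dual.eval ℝ L ⁅r α, r β⁆ ∈
        LinearMap.range r.dualMap := by
      rw [LinearMap.range_dualMap_eq_dualAnnihilator_ker,
        Submodule.mem_dualAnnihilator]
      intro δ hδ
      simp only [LinearMap.mem_ker] at hδ
      have := hYB α β δ
      rw [hδ] at this
      simp only [lie_zero, zero_lie, map_zero, zero_add] at this
      simpa using this
    obtain ⟨γ, hγ⟩ := hmem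
    refine ⟨-γ, ?_⟩
    have : Module.Dual.eval ℝ L (r (-γ)) = Module.Dual.eval ℝ L ⁅r α, r β⁆ := by
      rw [map_neg, map_neg, heval, hγ, neg_neg]
    exact (Module.evalEquiv ℝ L).injective this
  · intro α
    have := hskew α α
    linarith
  · intro α h
    rw [← Module.forall_dual_apply_eq_zero_iff ℝ (r α)]
    intro β
    have := hskew α β
    rw [h β] at this
    linarith
  · rintro x y z α β γ rfl rfl rfl
    have := hYB α β γ
    linarith
end

section
/- Let (𝔤, ω) be a finite-dimensional real symplectic Lie algebra and let A : 𝔤 × 𝔤 → 𝔤 be the bilinear product determined by ω(A_x y, z) = -ω(y, [x,z]) for all x, y, z ∈ 𝔤. Then A_{[x,y]} z = A_x (A_y z) - A_y (A_x z) for all x, y, z ∈ 𝔤 (i.e. the product A is flat: x ↦ A_x is a Lie algebra morphism from 𝔤 to End(𝔤)). -/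
/-- On a symplectic Lie algebra `(𝔤, ω)`, the bilinear product `A` determined by
`ω(A_x y, z) = -ω(y, [x,z])` is flat: `A_{[x,y]} z = A_x (A_y z) - A_y (A_x z)`. -/
theorem symplectic_product_flat
    {L : Type*} [LieRing L] [LieAlgebra ℝ L] [FiniteDimensional ℝ L]
    (ω : L →ₗ[ℝ] L →ₗ[ℝ] ℝ)
    (halt : ∀ x : L, ω x x = 0)
    (hnondeg : ∀ x : L, (∀ y : L, ω x y = 0) → x = 0)
    (hcocycle : ∀ x y z : L, ω ⁅x, y⁆ z + ω ⁅y, z⁆ x + ω ⁅z, x⁆ y = 0)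
    (A : L →ₗ[ℝ] L →ₗ[ℝ] L)
    (hA : ∀ x y z : L, ω (A x y) z = - ω y ⁅x, z⁆) :
    ∀ x y z : L, A ⁅x, y⁆ z = A x (A y z) - A y (A x z) := by
  intro x y z
  have h : ∀ w : L, ω (A ⁅x, y⁆ z - (A x (A y z) - A y (A x z))) w = 0 := by
    intro w
    simp only [map_sub, LinearMap.sub_apply, hA, lie_lie, map_sub]
    ring
  have h0 := hnondeg _ h
  exact sub_eq_zero.mp h0
end

section
/- (Key lemma in the proof of Theorem 1.1.) Let (𝔤, ω) be a 2n-dimensional real symplectic Lie algebra with symplectic basis (e_1,…,e_n,f_1,…,f_n), i.e. ω(e_i,e_j) = ω(f_i,f_j) = 0 and ω(e_i,f_j) = δ_{ij}. Then 𝔤 is unimodular (trace(ad_z) = 0 for all z ∈ 𝔤) if and only if Σ_{i=1}^n [e_i, f_i] = 0. -/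
/-!
In a symplectic basis the coordinates of `x` are `ω x fⱼ` and `-ω x eⱼ`, so
`trace T = Σᵢ (ω (T eᵢ) fᵢ - ω (T fᵢ) eᵢ)`. For `T = ad z` the cocycle identity turns each summand
into `-ω ⁅eᵢ, fᵢ⁆ z`, hence `trace (ad z) = -ω (Σᵢ ⁅eᵢ, fᵢ⁆) z`, and `ω` is nondegenerate.
-/

open Module

section

variable {R M : Type*} [CommRing R] [AddCommGroup M] [Module R M] {n : ℕ}

structure IsSymplecticBasis (ω : M →ₗ[R] M →ₗ[R] R) (b : Basis (Fin n ⊕ Fin n) R M) : Prop where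
  inl_inl : ∀ i j, ω (b (.inl i)) (b (.inl j)) = 0
  inr_inr : ∀ i j, ω (b (.inr i)) (b (.inr j)) = 0
  inl_inr : ∀ i j, ω (b (.inl i)) (b (.inr j)) = if i = j then 1 else 0

namespace IsSymplecticBasis

variable {ω : M →ₗ[R] M →ₗ[R] R} {b : Basis (Fin n ⊕ Fin n) R M}

theorem coord_inl (hb : IsSymplecticBasis ω b) (j : Fin n) :
    b.coord (.inl j) = ω.flip (b (.inr j)) := by
  refine b.ext fun k => ?_
  rcases k with i | i
  · simp [hb.inl_inr, Finsupp.single_apply]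
  · simp [hb.inr_inr]

theorem coord_inr (hb : IsSymplecticBasis ω b) (halt : ω.IsAlt) (j : Fin n) :
    b.coord (.inr j) = -ω.flip (b (.inl j)) := by
  refine b.ext fun k => ?_
  rcases k with i | i
  · simp [hb.inl_inl]
  · rw [LinearMap.neg_apply, LinearMap.flip_apply, halt.neg, hb.inl_inr]
    simp [Finsupp.single_apply, eq_comm (a := i)]

theorem repr_inl (hb : IsSymplecticBasis ω b) (x : M) (j : Fin n) :
    b.repr x (.inl j) = ω x (b (.inr j)) :=
  LinearMap.congr_fun (hb.coord_inl j) x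

theorem repr_inr (hb : IsSymplecticBasis ω b) (halt : ω.IsAlt) (x : M) (j : Fin n) :
    b.repr x (.inr j) = -ω x (b (.inl j)) :=
  LinearMap.congr_fun (hb.coord_inr halt j) x

theorem eq_zero_of_forall_eq_zero (hb : IsSymplecticBasis ω b) (halt : ω.IsAlt) {x : M}
    (hx : ∀ y, ω x y = 0) : x = 0 := by
  refine b.ext_elem fun k => ?_
  rcases k with j | j
  · simp [hb.repr_inl, hx]
  · simp [hb.repr_inr halt, hx]

theorem trace_eq_sum (hb : IsSymplecticBasis ω b) (halt : ω.IsAlt) (T : M →ₗ[R] M) :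
    LinearMap.trace R M T =
      ∑ i, (ω (T (b (.inl i))) (b (.inr i)) - ω (T (b (.inr i))) (b (.inl i))) := by
  classical
  rw [LinearMap.trace_eq_matrix_trace R b, Matrix.trace, Fintype.sum_sum_type,
    ← Finset.sum_add_distrib]
  simp [LinearMap.toMatrix_apply, hb.repr_inl, hb.repr_inr halt, sub_eq_add_neg]

theorem trace_ad_eq_neg_sum_lie {L : Type*} [LieRing L] [LieAlgebra R L]
    {ω : L →ₗ[R] L →ₗ[R] R} {b : Basis (Fin n ⊕ Fin n) R L}
    (hb : IsSymplecticBasis ω b) (halt : ω.IsAlt)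
    (hcocycle : ∀ x y z : L, ω ⁅x, y⁆ z + ω ⁅y, z⁆ x + ω ⁅z, x⁆ y = 0) (z : L) :
    LinearMap.trace R L (LieAlgebra.ad R L z) = -ω (∑ i, ⁅b (.inl i), b (.inr i)⁆) z := by
  rw [hb.trace_eq_sum halt, map_sum, LinearMap.sum_apply, ← Finset.sum_neg_distrib]
  refine Finset.sum_congr rfl fun i _ => ?_
  have hi := hcocycle (b (.inl i)) (b (.inr i)) z
  rw [← lie_skew (b (.inr i)) z, map_neg, LinearMap.neg_apply] at hi
  rw [LieAlgebra.ad_apply, LieAlgebra.ad_apply]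
  linear_combination hi

end IsSymplecticBasis

end

theorem symplectic_unimodular_iff_sum_brackets_eq_zero_general
    {L : Type*} [LieRing L] [LieAlgebra ℝ L] {n : ℕ}
    (ω : L →ₗ[ℝ] L →ₗ[ℝ] ℝ)
    (halt : ∀ x : L, ω x x = 0)
    (hcocycle : ∀ x y z : L, ω ⁅x, y⁆ z + ω ⁅y, z⁆ x + ω ⁅z, x⁆ y = 0)
    (b : Module.Basis (Fin n ⊕ Fin n) ℝ L)
    (hee : ∀ i j : Fin n, ω (b (Sum.inl i)) (b (Sum.inl j)) = 0)
    (hff : ∀ i j : Fin n, ω (b (Sum.inr i)) (b (Sum.inr j)) = 0)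
    (hef : ∀ i j : Fin n, ω (b (Sum.inl i)) (b (Sum.inr j)) = if i = j then 1 else 0) :
    (∀ z : L, LinearMap.trace ℝ L (LieAlgebra.ad ℝ L z) = 0) ↔
      ∑ i : Fin n, ⁅b (Sum.inl i), b (Sum.inr i)⁆ = 0 := by
  have hb : IsSymplecticBasis ω b := ⟨hee, hff, hef⟩
  simp only [hb.trace_ad_eq_neg_sum_lie halt hcocycle, neg_eq_zero]
  exact ⟨hb.eq_zero_of_forall_eq_zero halt, fun h z => by rw [h, map_zero, LinearMap.zero_apply]⟩

/-- A `2n`-dimensional symplectic Lie algebra `(𝔤, ω)` with symplectic basis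
`(e₁,…,eₙ,f₁,…,fₙ)` is unimodular (`trace (ad_z) = 0` for all `z`) if and only if
`Σᵢ [eᵢ, fᵢ] = 0`. -/
theorem symplectic_unimodular_iff_sum_brackets_eq_zero
    {L : Type*} [LieRing L] [LieAlgebra ℝ L] [FiniteDimensional ℝ L] {n : ℕ}
    (ω : L →ₗ[ℝ] L →ₗ[ℝ] ℝ)
    (halt : ∀ x : L, ω x x = 0)
    (hcocycle : ∀ x y z : L, ω ⁅x, y⁆ z + ω ⁅y, z⁆ x + ω ⁅z, x⁆ y = 0)
    (b : Module.Basis (Fin n ⊕ Fin n) ℝ L)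
    (hee : ∀ i j : Fin n, ω (b (Sum.inl i)) (b (Sum.inl j)) = 0)
    (hff : ∀ i j : Fin n, ω (b (Sum.inr i)) (b (Sum.inr j)) = 0)
    (hef : ∀ i j : Fin n, ω (b (Sum.inl i)) (b (Sum.inr j)) = if i = j then 1 else 0) :
    (∀ z : L, LinearMap.trace ℝ L (LieAlgebra.ad ℝ L z) = 0) ↔
      ∑ i : Fin n, ⁅b (Sum.inl i), b (Sum.inr i)⁆ = 0 :=
  symplectic_unimodular_iff_sum_brackets_eq_zero_general ω halt hcocycle b hee hff hef
end

section
/- Let λ = (λ_1, λ_2) with 0 < λ_1 ≤ λ_2 and let 𝔤_λ be the 6-dimensional oscillator Lie algebra with basis (e_{-1}, e_0, e_1, e_2, ě_1, ě_2) and brackets [e_{-1}, e_j] = λ_j ě_j, [e_j, ě_j] = e_0, [e_{-1}, ě_j] = -λ_j e_j for j = 1, 2, all other brackets of basis elements being zero or determined by antisymmetry. Then the bivector r = e_0 ∧ e_1 + e_2 ∧ ě_1 is a solution of the classical Yang–Baxter equation on 𝔤_λ, and its image Im r = span{e_0, e_1, e_2, ě_1} is a nilpotent (hence unimodular) Lie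 subalgebra of 𝔤_λ. -/
/-!
Write `r = z ∧ e₁ + e₂ ∧ f₁` with `z = e₀` central, `⁅e₁, f₁⁆ = z` and `e₂` commuting with `e₁`
and `f₁`. Then every bracket `⁅r β, r γ⁆` equals `(β z * γ e₂ - β e₂ * γ z) • z`, and the
Yang–Baxter sum becomes a `3 × 3` determinant with two equal rows. Since `z ∈ Im r` is central,
`Im r` is closed under the bracket and its double brackets vanish, so it is two-step nilpotent;
the adjoint endomorphisms of a nilpotent Lie algebra are nilpotent, hence traceless.
-/

open LieModule in
theorem LieModule.isNilpotent_of_lie_lie_eq_zero (R : Type*) {L M : Type*} [CommRing R]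
    [LieRing L] [LieAlgebra R L] [AddCommGroup M] [Module R M] [LieRingModule L M]
    [LieModule R L M] (h : ∀ (x y : L) (m : M), ⁅x, ⁅y, m⁆⁆ = 0) : IsNilpotent L M := by
  have hcentral : lowerCentralSeries R L M 1 ≤ maxTrivSubmodule R L M := by
    rw [lowerCentralSeries_succ, lowerCentralSeries_zero, LieSubmodule.lie_le_iff]
    rintro y - m -
    exact fun x => h x y m
  refine (isNilpotent_iff R L M).mpr ⟨2, ?_⟩
  rw [lowerCentralSeries_succ, eq_bot_iff, ← ideal_oper_maxTrivSubmodule_eq_bot R L M ⊤]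
  exact LieSubmodule.mono_lie_right ⊤ hcentral

theorem LieAlgebra.trace_ad_eq_zero_of_isNilpotent {R L : Type*} [CommRing R] [IsReduced R]
    [LieRing L] [LieAlgebra R L] [Module.Free R L] [Module.Finite R L] [LieRing.IsNilpotent L]
    (x : L) : LinearMap.trace R L (LieAlgebra.ad R L x) = 0 :=
  (LinearMap.isNilpotent_trace_of_isNilpotent
    (LieModule.isNilpotent_toEnd_of_isNilpotent R L L x)).eq_zero

theorem Module.Basis.range_eq_span_of_eq_wedge_add_wedge {R M ι : Type*} [CommRing R]
    [AddCommGroup M] [Module R M] (b : Module.Basis ι R M) {i j k l : ι} (hij : i ≠ j)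
    (hik : i ≠ k) (hil : i ≠ l) (hjk : j ≠ k) (hjl : j ≠ l) (hkl : k ≠ l)
    {r : Module.Dual R M →ₗ[R] M}
    (hr : ∀ α : Module.Dual R M,
      r α = α (b i) • b j - α (b j) • b i + α (b k) • b l - α (b l) • b k) :
    LinearMap.range r = Submodule.span R {b i, b j, b k, b l} := by
  apply le_antisymm
  · rintro _ ⟨α, rfl⟩
    rw [hr]
    refine sub_mem (add_mem (sub_mem ?_ ?_) ?_) ?_ <;>
      exact Submodule.smul_mem _ _ (Submodule.subset_span (by simp))
  · rw [Submodule.span_le]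
    rintro x (rfl | rfl | rfl | rfl)
    · exact ⟨-b.coord j, by simp [hr, hij, hjk, hjl]⟩
    · exact ⟨b.coord i, by simp [hr, hij, hik, hil]⟩
    · exact ⟨-b.coord l, by simp [hr, hil, hjl, hkl]⟩
    · exact ⟨b.coord k, by simp [hr, hik, hjk, hkl]⟩

section

variable {R L : Type*} [CommRing R] [LieRing L] [LieAlgebra R L]

def IsCYBESolution (r : Module.Dual R L →ₗ[R] L) : Prop :=
  ∀ α β γ : Module.Dual R L, α ⁅r β, r γ⁆ + β ⁅r γ, r α⁆ + γ ⁅r α, r β⁆ = 0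

theorem isCYBESolution_of_lie_eq_smul {r : Module.Dual R L →ₗ[R] L} (x y : L)
    (h : ∀ β γ : Module.Dual R L, ⁅r β, r γ⁆ = (β x * γ y - β y * γ x) • x) :
    IsCYBESolution r := by
  intro α β γ
  simp only [h, map_smul, smul_eq_mul]
  ring

theorem lie_eq_zero_of_forall_lie_basis_eq_zero {ι : Type*} (b : Module.Basis ι R L) {z : L}
    (hz : ∀ i, ⁅z, b i⁆ = 0) (x : L) : ⁅z, x⁆ = 0 :=
  LinearMap.congr_fun (b.ext (f₁ := LieAlgebra.ad R L z) (f₂ := 0) hz) x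

theorem lie_eq_smul_of_heisenberg {r : Module.Dual R L →ₗ[R] L} {z e₁ e₂ f₁ : L}
    (hz : ∀ x : L, ⁅z, x⁆ = 0) (hef : ⁅e₁, f₁⁆ = z) (he : ⁅e₁, e₂⁆ = 0) (hf : ⁅e₂, f₁⁆ = 0)
    (hr : ∀ α : Module.Dual R L, r α = α z • e₁ - α e₁ • z + α e₂ • f₁ - α f₁ • e₂)
    (β γ : Module.Dual R L) : ⁅r β, r γ⁆ = (β z * γ e₂ - β e₂ * γ z) • z := by
  have hz' : ∀ x, ⁅x, z⁆ = 0 := fun x => by rw [← lie_skew, hz, neg_zero]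
  have hfe : ⁅f₁, e₁⁆ = -z := by rw [← lie_skew, hef]
  have he' : ⁅e₂, e₁⁆ = 0 := by rw [← lie_skew, he, neg_zero]
  have hf' : ⁅f₁, e₂⁆ = 0 := by rw [← lie_skew, hf, neg_zero]
  rw [hr β, hr γ]
  simp only [lie_add, add_lie, lie_sub, sub_lie, lie_smul, smul_lie, hz, hz', hef, hfe, he, he',
    hf, hf', lie_self, smul_zero, smul_neg]
  module

theorem exists_lieSubalgebra_isNilpotent_of_lie_eq_smul {p : Submodule R L} {z : L}
    (hz : ∀ x : L, ⁅z, x⁆ = 0) (hzp : z ∈ p) (h : ∀ x ∈ p, ∀ y ∈ p, ∃ c : R, ⁅x, y⁆ = c • z) :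
    ∃ S : LieSubalgebra R L, S.toSubmodule = p ∧ LieRing.IsNilpotent S := by
  let S : LieSubalgebra R L :=
    { p with
      lie_mem' := fun {x y} hx hy => by
        obtain ⟨c, hc⟩ := h x hx y hy
        exact hc ▸ p.smul_mem c hzp }
  refine ⟨S, rfl, LieModule.isNilpotent_of_lie_lie_eq_zero R fun x y w => Subtype.ext ?_⟩
  obtain ⟨c, hc⟩ := h y y.2 w w.2
  change ⁅(x : L), ⁅(y : L), (w : L)⁆⁆ = 0
  rw [hc, lie_smul, ← lie_skew, hz, neg_zero, smul_zero]

end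

theorem oscillator_yang_baxter_solution_with_nilpotent_image_general
    {L : Type*} [LieRing L] [LieAlgebra ℝ L]
    (b : Module.Basis (Fin 6) ℝ L)
    -- brackets: b 0 = e₋₁, b 1 = e₀, b 2 = e₁, b 3 = e₂, b 4 = ě₁, b 5 = ě₂
    (h24 : ⁅b 2, b 4⁆ = b 1)
    (hcentral : ∀ i : Fin 6, ⁅b 1, b i⁆ = 0)
    (h23 : ⁅b 2, b 3⁆ = 0)
    (h34 : ⁅b 3, b 4⁆ = 0)
    -- the bivector `r = e₀ ∧ e₁ + e₂ ∧ ě₁`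
    (r : Module.Dual ℝ L →ₗ[ℝ] L)
    (hr : ∀ α : Module.Dual ℝ L,
      r α = α (b 1) • b 2 - α (b 2) • b 1 + α (b 3) • b 4 - α (b 4) • b 3) :
    -- `r` solves the classical Yang–Baxter equation
    (∀ α β γ : Module.Dual ℝ L,
      α ⁅r β, r γ⁆ + β ⁅r γ, r α⁆ + γ ⁅r α, r β⁆ = 0) ∧
    -- `Im r = span{e₀, e₁, e₂, ě₁}` is a nilpotent (hence unimodular) Lie subalgebra
    (∃ S : LieSubalgebra ℝ L,
      S.toSubmodule = LinearMap.range r ∧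
      S.toSubmodule = Submodule.span ℝ {b 1, b 2, b 3, b 4} ∧
      LieRing.IsNilpotent S ∧
      (∀ z : S, LinearMap.trace ℝ S (LieAlgebra.ad ℝ S z) = 0)) := by
  have := Module.Finite.of_basis b
  have hcenter := lie_eq_zero_of_forall_lie_basis_eq_zero b hcentral
  have hbracket := lie_eq_smul_of_heisenberg hcenter h24 h23 h34 hr
  have hrange : LinearMap.range r = Submodule.span ℝ {b 1, b 2, b 3, b 4} :=
    b.range_eq_span_of_eq_wedge_add_wedge (by decide) (by decide) (by decide) (by decide)
      (by decide) (by decide) hr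
  obtain ⟨S, hS, hnil⟩ := exists_lieSubalgebra_isNilpotent_of_lie_eq_smul hcenter
    (hrange ▸ Submodule.subset_span (by simp)) (by
      rintro _ ⟨β, rfl⟩ _ ⟨γ, rfl⟩
      exact ⟨_, hbracket β γ⟩)
  exact ⟨isCYBESolution_of_lie_eq_smul _ _ hbracket, S, hS, hS.trans hrange, hnil,
    LieAlgebra.trace_ad_eq_zero_of_isNilpotent⟩

/-- On the 6-dimensional oscillator Lie algebra `𝔤_λ` with basis
`(e₋₁, e₀, e₁, e₂, ě₁, ě₂) = (b 0, b 1, b 2, b 3, b 4, b 5)` and brackets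
`[e₋₁, eⱼ] = λⱼ ěⱼ`, `[eⱼ, ěⱼ] = e₀`, `[e₋₁, ěⱼ] = -λⱼ eⱼ` (all other brackets of
basis vectors zero or given by antisymmetry), the bivector `r = e₀ ∧ e₁ + e₂ ∧ ě₁`
(as a map `α ↦ α(e₀)e₁ - α(e₁)e₀ + α(e₂)ě₁ - α(ě₁)e₂`) is a solution of the classical
Yang–Baxter equation, and `Im r = span{e₀, e₁, e₂, ě₁}` is a nilpotent (hence
unimodular) Lie subalgebra of `𝔤_λ`. -/
theorem oscillator_yang_baxter_solution_with_nilpotent_image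
    {L : Type*} [LieRing L] [LieAlgebra ℝ L] [FiniteDimensional ℝ L]
    (lam₁ lam₂ : ℝ) (hlam₁ : 0 < lam₁) (hlam : lam₁ ≤ lam₂)
    (b : Module.Basis (Fin 6) ℝ L)
    -- brackets: b 0 = e₋₁, b 1 = e₀, b 2 = e₁, b 3 = e₂, b 4 = ě₁, b 5 = ě₂
    (h02 : ⁅b 0, b 2⁆ = lam₁ • b 4)
    (h03 : ⁅b 0, b 3⁆ = lam₂ • b 5)
    (h24 : ⁅b 2, b 4⁆ = b 1)
    (h35 : ⁅b 3, b 5⁆ = b 1)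
    (h04 : ⁅b 0, b 4⁆ = -(lam₁ • b 2))
    (h05 : ⁅b 0, b 5⁆ = -(lam₂ • b 3))
    (hcentral : ∀ i : Fin 6, ⁅b 1, b i⁆ = 0)
    (h23 : ⁅b 2, b 3⁆ = 0)
    (h25 : ⁅b 2, b 5⁆ = 0)
    (h34 : ⁅b 3, b 4⁆ = 0)
    (h45 : ⁅b 4, b 5⁆ = 0)
    -- the bivector `r = e₀ ∧ e₁ + e₂ ∧ ě₁`
    (r : Module.Dual ℝ L →ₗ[ℝ] L)
    (hr : ∀ α : Module.Dual ℝ L,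
      r α = α (b 1) • b 2 - α (b 2) • b 1 + α (b 3) • b 4 - α (b 4) • b 3) :
    -- `r` solves the classical Yang–Baxter equation
    (∀ α β γ : Module.Dual ℝ L,
      α ⁅r β, r γ⁆ + β ⁅r γ, r α⁆ + γ ⁅r α, r β⁆ = 0) ∧
    -- `Im r = span{e₀, e₁, e₂, ě₁}` is a nilpotent (hence unimodular) Lie subalgebra
    (∃ S : LieSubalgebra ℝ L,
      S.toSubmodule = LinearMap.range r ∧
      S.toSubmodule = Submodule.span ℝ {b 1, b 2, b 3, b 4} ∧
      LieRing.IsNilpotent S ∧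
      (∀ z : S, LinearMap.trace ℝ S (LieAlgebra.ad ℝ S z) = 0)) :=
  oscillator_yang_baxter_solution_with_nilpotent_image_general b h24 hcentral h23 h34 r hr
end
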